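/- arXiv:1809.06102 — 5 statements merged into one kernel-verified Lean document; each statement's English description precedes it below -/
import Mathlib

section
/- For any n×n stochastic matrix P (nonnegative entries, each row sums to 1) and any λ ∈ (0,1], the determinant of Id − (1−λ)P is at least λⁿ. -/
open Finset

lemma abs_det_le_prod_col {n : ℕ} (M : Matrix (Fin n) (Fin n) ℝ)
    (h : ∀ i j, 0 ≤ M i j) : |M.det| ≤ ∏ j, ∑ i, M i j := by
  have habs : ∀ (u : ℤˣ) (x : ℝ), |u • x| = |x| := by
    intro u x
    rcases Int.units_eq_one_or u with hu | hu <;> simp [hu]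
  calc |M.det| = |∑ σ : Equiv.Perm (Fin n), Equiv.Perm.sign σ • ∏ i, M (σ i) i| := by
        rw [Matrix.det_apply]
    _ ≤ ∑ σ : Equiv.Perm (Fin n), |Equiv.Perm.sign σ • ∏ i, M (σ i) i| :=
        Finset.abs_sum_le_sum_abs _ _
    _ = ∑ σ : Equiv.Perm (Fin n), ∏ i, M (σ i) i := by
        refine Finset.sum_congr rfl fun σ _ => ?_
        rw [habs, abs_of_nonneg (Finset.prod_nonneg fun i _ => h _ _)]
    _ = ∑ f ∈ Finset.univ.image (fun σ : Equiv.Perm (Fin n) => (σ : Fin n → Fin n)),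
          ∏ i, M (f i) i := by
        rw [Finset.sum_image]
        intro σ _ τ _ hst
        exact Equiv.coe_fn_injective hst
    _ ≤ ∑ f : Fin n → Fin n, ∏ i, M (f i) i := by
        refine Finset.sum_le_sum_of_subset_of_nonneg (Finset.subset_univ _) ?_
        intro f _ _
        exact Finset.prod_nonneg fun i _ => h _ _
    _ = ∏ j, ∑ i, M i j := by
        rw [Finset.prod_univ_sum (t := fun _ : Fin n => (univ : Finset (Fin n)))
          (f := fun j i => M i j), Fintype.piFinset_univ]

lemma abs_det_le_prod_row {n : ℕ} (M : Matrix (Fin n) (Fin n) ℝ)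
    (h : ∀ i j, 0 ≤ M i j) : |M.det| ≤ ∏ i, ∑ j, M i j := by
  simpa [Matrix.det_transpose] using abs_det_le_prod_col M.transpose (fun i j => h j i)

section Main

attribute [local instance] Matrix.linftyOpNormedRing Matrix.linftyOpNormedAlgebra

/-- **Ostrovski's bound.** For any `n × n` stochastic matrix `P` (nonnegative entries,
rows summing to 1) and any `λ ∈ (0,1]`, `det (Id - (1-λ)P) ≥ λ^n`. -/
theorem stmt0 (n : ℕ) (P : Matrix (Fin n) (Fin n) ℝ)
    (hP : ∀ i j, 0 ≤ P i j) (hrow : ∀ i, ∑ j, P i j = 1)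
    (lam : ℝ) (hl0 : 0 < lam) (hl1 : lam ≤ 1) :
    lam ^ n ≤ ((1 : Matrix (Fin n) (Fin n) ℝ) - (1 - lam) • P).det := by
  classical
  set M : Matrix (Fin n) (Fin n) ℝ := (1 - lam) • P with hMdef
  have h1l : 0 ≤ 1 - lam := by linarith
  have h1l' : 1 - lam < 1 := by linarith
  -- norm estimates
  have hnP : ‖P‖ ≤ 1 := by
    rw [Matrix.linfty_opNorm_def, show (1 : ℝ) = ((1 : NNReal) : ℝ) by norm_num,
      NNReal.coe_le_coe]
    refine Finset.sup_le fun i _ => ?_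
    rw [← NNReal.coe_le_coe]
    push_cast
    simp only [coe_nnnorm, Real.norm_eq_abs]
    calc ∑ j, |P i j| = ∑ j, P i j := by
          exact Finset.sum_congr rfl fun j _ => abs_of_nonneg (hP i j)
      _ = 1 := hrow i
      _ ≤ 1 := le_rfl
  have hnM : ‖M‖ < 1 := by
    have hM : ‖M‖ = (1 - lam) * ‖P‖ := by
      rw [hMdef, norm_smul, Real.norm_eq_abs, abs_of_nonneg h1l]
    nlinarith [norm_nonneg P]
  -- entrywise facts
  have hM0 : ∀ i j, 0 ≤ M i j := by
    intro i j
    simpa [hMdef, Matrix.smul_apply] using mul_nonneg h1l (hP i j)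
  have hrowM : ∀ i, ∑ j, M i j = 1 - lam := by
    intro i
    simp only [hMdef, Matrix.smul_apply, smul_eq_mul, ← Finset.mul_sum, hrow i, mul_one]
  have hpow0 : ∀ (k : ℕ) (i j : Fin n), 0 ≤ (M ^ k) i j := by
    intro k
    induction k with
    | zero => intro i j; rw [pow_zero, Matrix.one_apply]; positivity
    | succ k ih =>
        intro i j
        rw [pow_succ, Matrix.mul_apply]
        exact Finset.sum_nonneg fun l _ => mul_nonneg (ih i l) (hM0 l j)
  have hpowrow : ∀ (k : ℕ) (i : Fin n), ∑ j, (M ^ k) i j = (1 - lam) ^ k := by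
    intro k
    induction k with
    | zero => intro i; simp [Matrix.one_apply]
    | succ k ih =>
        intro i
        rw [pow_succ']
        calc ∑ j, (M * M ^ k) i j = ∑ j, ∑ l, M i l * (M ^ k) l j := by
              simp [Matrix.mul_apply]
          _ = ∑ l, M i l * ∑ j, (M ^ k) l j := by
              rw [Finset.sum_comm]
              simp [Finset.mul_sum]
          _ = (1 - lam) * (1 - lam) ^ k := by
              simp only [ih]
              rw [← Finset.sum_mul, hrowM i]
          _ = (1 - lam) ^ (k + 1) := (pow_succ' _ _).symm
  -- determinant bound on partial sums
  have hbound : ∀ m : ℕ, |(∑ k ∈ Finset.range m, M ^ k).det| ≤ (lam ^ n)⁻¹ := by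
    intro m
    have hT0 : ∀ i j, 0 ≤ (∑ k ∈ Finset.range m, M ^ k) i j := by
      intro i j
      rw [Matrix.sum_apply]
      exact Finset.sum_nonneg fun k _ => hpow0 k i j
    refine le_trans (abs_det_le_prod_row _ hT0) ?_
    have hrw : (lam ^ n)⁻¹ = ∏ _i : Fin n, lam⁻¹ := by
      rw [Finset.prod_const, Finset.card_univ, Fintype.card_fin, inv_pow]
    rw [hrw]
    refine Finset.prod_le_prod (fun i _ => Finset.sum_nonneg fun j _ => hT0 i j)
      (fun i _ => ?_)
    have hrowi : ∑ j, (∑ k ∈ Finset.range m, M ^ k) i j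
        = ∑ k ∈ Finset.range m, (1 - lam) ^ k := by
      simp only [Matrix.sum_apply]
      rw [Finset.sum_comm]
      exact Finset.sum_congr rfl fun k _ => hpowrow k i
    rw [hrowi]
    have hs : Summable fun k : ℕ => (1 - lam) ^ k :=
      summable_geometric_of_lt_one h1l h1l'
    calc ∑ k ∈ Finset.range m, (1 - lam) ^ k ≤ ∑' k : ℕ, (1 - lam) ^ k :=
          Summable.sum_le_tsum _ (fun k _ => pow_nonneg h1l k) hs
      _ = (1 - (1 - lam))⁻¹ := tsum_geometric_of_lt_one h1l h1l'
      _ = lam⁻¹ := by ring_nf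
  -- the unit 1 - M
  set u : (Matrix (Fin n) (Fin n) ℝ)ˣ := Units.oneSub M hnM with hu
  have hsum : HasSum (fun k : ℕ => M ^ k) (↑u⁻¹ : Matrix (Fin n) (Fin n) ℝ) :=
    (summable_geometric_of_norm_lt_one hnM).hasSum
  have hcont : Continuous fun A : Matrix (Fin n) (Fin n) ℝ => |A.det| :=
    continuous_abs.comp (continuous_id.matrix_det)
  have hdetinv : |(↑u⁻¹ : Matrix (Fin n) (Fin n) ℝ).det| ≤ (lam ^ n)⁻¹ :=
    le_of_tendsto' (hcont.continuousAt.tendsto.comp hsum.tendsto_sum_nat) hbound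
  have hmul : ((1 : Matrix (Fin n) (Fin n) ℝ) - M).det
      * (↑u⁻¹ : Matrix (Fin n) (Fin n) ℝ).det = 1 := by
    rw [← Matrix.det_mul,
      show ((1 : Matrix (Fin n) (Fin n) ℝ) - M) = (u : Matrix (Fin n) (Fin n) ℝ) from rfl,
      u.mul_inv, Matrix.det_one]
  -- positivity of the determinant via IVT
  have hnz : ∀ t ∈ Set.Icc (0 : ℝ) 1,
      ((1 : Matrix (Fin n) (Fin n) ℝ) - t • M).det ≠ 0 := by
    intro t ht
    have hlt : ‖t • M‖ < 1 := by
      rw [norm_smul, Real.norm_eq_abs, abs_of_nonneg ht.1]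
      calc t * ‖M‖ ≤ 1 * ‖M‖ := mul_le_mul_of_nonneg_right ht.2 (norm_nonneg M)
        _ = ‖M‖ := one_mul _
        _ < 1 := hnM
    exact ((Matrix.isUnit_iff_isUnit_det _).mp
      (isUnit_one_sub_of_norm_lt_one hlt)).ne_zero
  have hcont2 : ContinuousOn
      (fun t : ℝ => ((1 : Matrix (Fin n) (Fin n) ℝ) - t • M).det) (Set.Icc 0 1) :=
    ((continuous_const.sub (continuous_id.smul continuous_const)).matrix_det).continuousOn
  have hpos : 0 < ((1 : Matrix (Fin n) (Fin n) ℝ) - M).det := by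
    by_contra hneg
    push_neg at hneg
    have h10 : (fun t : ℝ => ((1 : Matrix (Fin n) (Fin n) ℝ) - t • M).det) 1 ≤ 0 := by
      simpa using hneg
    have h00 : (0:ℝ) ≤ (fun t : ℝ => ((1 : Matrix (Fin n) (Fin n) ℝ) - t • M).det) 0 := by
      simp
    obtain ⟨t, ht, hz⟩ := intermediate_value_Icc' zero_le_one hcont2 ⟨h10, h00⟩
    exact hnz t ht hz
  -- conclude
  have hdet2 : (↑u⁻¹ : Matrix (Fin n) (Fin n) ℝ).det ≤ (lam ^ n)⁻¹ :=
    (le_abs_self _).trans hdetinv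
  have hdetinvpos : 0 < (↑u⁻¹ : Matrix (Fin n) (Fin n) ℝ).det := by
    nlinarith
  have hlamn : 0 < lam ^ n := pow_pos hl0 n
  have key : lam ^ n ≤ ((1 : Matrix (Fin n) (Fin n) ℝ) - M).det := by
    nlinarith [mul_inv_cancel₀ (ne_of_gt hlamn)]
  exact key

end Main
end

section
/- Let A and B be p×q real matrices with all entries of B positive. Then there exists a unique z ∈ ℝ with val(A − zB) = 0. -/
/-- The minimax value of a matrix game over mixed strategies (simplices). -/
noncomputable def matVal {α β : Type*} [Fintype α] [Fintype β]
    (M : Matrix α β ℝ) : ℝ :=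
  ⨆ s : stdSimplex ℝ α, ⨅ t : stdSimplex ℝ β, ∑ a, ∑ b, s.1 a * M a b * t.1 b

/-! Averaging entrywise inequalities against mixed strategies shows that
`matVal M₁ ≤ matVal M₂ + c` whenever `M₁ ≤ M₂ + c` entrywise. Hence `f z = matVal (A - z • B)` is Lipschitz and satisfies
`f y ≤ f x - (y - x) min B` for `x ≤ y`; a continuous function decreasing at least linearly
with positive slope is a bijection of `ℝ`, so it takes the value `0` exactly once. -/

open Finset Filter

theorem Continuous.bijective_of_le_sub_mul {f : ℝ → ℝ} (hf : Continuous f) {m : ℝ}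
    (hm : 0 < m) (h : ∀ x y, x ≤ y → f y ≤ f x - (y - x) * m) : Function.Bijective f := by
  have hanti : StrictAnti f := fun x y hxy => by linarith [h x y hxy.le, mul_pos (sub_pos.2 hxy) hm]
  refine ⟨hanti.injective, hf.surjective' ?_ ?_⟩
  · have hlow : ∀ z ≤ 0, f 0 - z * m ≤ f z := fun z hz => by linarith [h z 0 hz]
    refine tendsto_atTop_mono' _ ((eventually_le_atBot 0).mono hlow) ?_
    simp_rw [sub_eq_add_neg]
    exact tendsto_atTop_add_const_left _ _
      (tendsto_neg_atBot_atTop.comp (tendsto_id.atBot_mul_const hm))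
  · have hupp : ∀ z ≥ 0, f z ≤ f 0 - z * m := fun z hz => by linarith [h 0 z hz]
    refine tendsto_atBot_mono' _ ((eventually_ge_atTop 0).mono hupp) ?_
    simp_rw [sub_eq_add_neg]
    exact tendsto_atBot_add_const_left _ _
      (tendsto_neg_atTop_atBot.comp (tendsto_id.atTop_mul_const hm))

section MatrixGame

variable {α β : Type*} [Fintype α] [Fintype β]

noncomputable def gamePayoff (M : Matrix α β ℝ) (s : stdSimplex ℝ α)
    (t : stdSimplex ℝ β) : ℝ :=
  ∑ a, ∑ b, s a * M a b * t b

theorem matVal_eq_iSup_iInf_gamePayoff (M : Matrix α β ℝ) :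
    matVal M = ⨆ s, ⨅ t, gamePayoff M s t := rfl

theorem gamePayoff_le_add {M₁ M₂ : Matrix α β ℝ} {c : ℝ}
    (h : ∀ a b, M₁ a b ≤ M₂ a b + c) (s : stdSimplex ℝ α) (t : stdSimplex ℝ β) :
    gamePayoff M₁ s t ≤ gamePayoff M₂ s t + c :=
  calc gamePayoff M₁ s t ≤ ∑ a, ∑ b, s a * (M₂ a b + c) * t b := by
        unfold gamePayoff
        gcongr with a _ b _
        exacts [stdSimplex.zero_le t b, stdSimplex.zero_le s a, h a b]
    _ = gamePayoff M₂ s t + c := by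
        simp only [gamePayoff, mul_add, add_mul, sum_add_distrib, ← mul_sum, ← sum_mul,
          stdSimplex.sum_eq_one, mul_one, one_mul]

theorem gamePayoff_le {M : Matrix α β ℝ} {c : ℝ} (h : ∀ a b, M a b ≤ c)
    (s : stdSimplex ℝ α) (t : stdSimplex ℝ β) : gamePayoff M s t ≤ c := by
  simpa [gamePayoff] using gamePayoff_le_add (M₂ := 0) (by simpa using h) s t

theorem le_gamePayoff {M : Matrix α β ℝ} {c : ℝ} (h : ∀ a b, c ≤ M a b)
    (s : stdSimplex ℝ α) (t : stdSimplex ℝ β) : c ≤ gamePayoff M s t := by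
  have := gamePayoff_le_add (M₁ := 0) (c := -c) (fun a b => by simpa using h a b) s t
  simp only [gamePayoff, Matrix.zero_apply, mul_zero, zero_mul, sum_const_zero] at this ⊢
  linarith

theorem bddBelow_range_gamePayoff (M : Matrix α β ℝ) (s : stdSimplex ℝ α) :
    BddBelow (Set.range (gamePayoff M s)) := by
  obtain ⟨c, hc⟩ := (Set.finite_range (Function.uncurry M)).bddBelow
  exact ⟨c, Set.forall_mem_range.2 (le_gamePayoff (fun a b => hc ⟨(a, b), rfl⟩) s)⟩

theorem bddAbove_range_iInf_gamePayoff [Nonempty β] (M : Matrix α β ℝ) :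
    BddAbove (Set.range fun s => ⨅ t, gamePayoff M s t) := by
  obtain ⟨c, hc⟩ := (Set.finite_range (Function.uncurry M)).bddAbove
  obtain ⟨t⟩ : Nonempty (stdSimplex ℝ β) := inferInstance
  refine ⟨c, Set.forall_mem_range.2 fun s => ?_⟩
  exact (ciInf_le (bddBelow_range_gamePayoff M s) t).trans
    (gamePayoff_le (fun a b => hc ⟨(a, b), rfl⟩) s t)

theorem matVal_le_add [Nonempty α] [Nonempty β] {M₁ M₂ : Matrix α β ℝ} {c : ℝ}
    (h : ∀ a b, M₁ a b ≤ M₂ a b + c) : matVal M₁ ≤ matVal M₂ + c := by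
  simp only [matVal_eq_iSup_iInf_gamePayoff]
  refine ciSup_le fun s => ?_
  have hinf : (⨅ t, gamePayoff M₁ s t) - c ≤ ⨅ t, gamePayoff M₂ s t :=
    le_ciInf fun t => by
      linarith [ciInf_le (bddBelow_range_gamePayoff M₁ s) t, gamePayoff_le_add h s t]
  linarith [le_ciSup (bddAbove_range_iInf_gamePayoff M₂) s]

theorem continuous_matVal_sub_smul [Nonempty α] [Nonempty β] (A B : Matrix α β ℝ) :
    Continuous fun z : ℝ => matVal (A - z • B) := by
  obtain ⟨K, hK⟩ := (Set.finite_range fun ab : α × β => |B ab.1 ab.2|).bddAbove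
  refine (LipschitzWith.of_le_add_mul' K fun x y => matVal_le_add fun a b => ?_).continuous
  have hB : |B a b| ≤ K := hK ⟨(a, b), rfl⟩
  have : (y - x) * B a b ≤ K * dist x y :=
    calc (y - x) * B a b ≤ |y - x| * |B a b| := (le_abs_self _).trans (abs_mul _ _).le
      _ ≤ |y - x| * K := by gcongr
      _ = K * dist x y := by rw [Real.dist_eq, abs_sub_comm, mul_comm]
  simp only [Matrix.sub_apply, Matrix.smul_apply, smul_eq_mul]
  linarith

theorem matVal_sub_smul_le [Nonempty α] [Nonempty β] (A : Matrix α β ℝ) {B : Matrix α β ℝ}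
    {m : ℝ} (hm : ∀ a b, m ≤ B a b) {x y : ℝ} (hxy : x ≤ y) :
    matVal (A - y • B) ≤ matVal (A - x • B) - (y - x) * m := by
  rw [sub_eq_add_neg (matVal _)]
  refine matVal_le_add fun a b => ?_
  simp only [Matrix.sub_apply, Matrix.smul_apply, smul_eq_mul]
  nlinarith [hm a b]

end MatrixGame

/-- If all entries of `B` are positive, then there is a unique `z ∈ ℝ` with
`val (A - zB) = 0`. -/
theorem stmt8 (p q : ℕ) (hp : 0 < p) (hq : 0 < q)
    (A B : Matrix (Fin p) (Fin q) ℝ) (hB : ∀ a b, 0 < B a b) :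
    ∃! z : ℝ, matVal (A - z • B) = 0 := by
  have : Nonempty (Fin p) := ⟨⟨0, hp⟩⟩
  have : Nonempty (Fin q) := ⟨⟨0, hq⟩⟩
  obtain ⟨ab, hab⟩ := Finite.exists_min (Function.uncurry B)
  have hbij := (continuous_matVal_sub_smul A B).bijective_of_le_sub_mul (hB ab.1 ab.2)
    fun x y hxy => matVal_sub_smul_le A (fun a b => hab (a, b)) hxy
  exact hbij.existsUnique 0
end

section
/- Let f : (0,1] → ℝ be a continuous function and R₁,…,R_L rational functions (defined except at finitely many poles) such that for every λ ∈ (0,1], f(λ) = R_i(λ) for some i. Then there exist λ₀ > 0 and an index i such that f(λ) = R_i(λ) for all λ ∈ (0, λ₀). -/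
/-- A finite set of reals avoids some interval `(0, ε)`. -/
lemma aux_avoid (s : Set ℝ) (hs : s.Finite) :
    ∃ ε > (0:ℝ), ∀ x ∈ Set.Ioo (0:ℝ) ε, x ∉ s := by
  classical
  have hs' : (s ∩ Set.Ioi (0:ℝ)).Finite := hs.inter_of_left _
  rcases eq_or_ne (s ∩ Set.Ioi (0:ℝ)) ∅ with he | hne
  · exact ⟨1, one_pos, fun x hx hxs => by
      have : x ∈ s ∩ Set.Ioi (0:ℝ) := ⟨hxs, hx.1⟩
      simp [he] at this⟩
  · have hne' : (hs'.toFinset).Nonempty := by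
      rw [Set.Finite.toFinset_nonempty]
      exact Set.nonempty_iff_ne_empty.mpr hne
    set m := hs'.toFinset.min' hne' with hm
    have hmem : m ∈ s ∩ Set.Ioi (0:ℝ) := by
      have := hs'.toFinset.min'_mem hne'
      rwa [Set.Finite.mem_toFinset] at this
    refine ⟨m, hmem.2, fun x hx hxs => ?_⟩
    have : m ≤ x := hs'.toFinset.min'_le x (by
      rw [Set.Finite.mem_toFinset]; exact ⟨hxs, hx.1⟩)
    exact absurd hx.2 (not_lt.mpr this)

/-- If a continuous function `f : (0,1] → ℝ` agrees at every point with one of finitely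
many rational functions `R_i = P_i / Q_i`, then near `0` it agrees with a single one of
them: there are `λ₀ > 0` and an index `i` with `f(λ) = R_i(λ)` for all `λ ∈ (0,λ₀)`. -/
theorem stmt10 (f : ℝ → ℝ) (hf : ContinuousOn f (Set.Ioc 0 1))
    (L : ℕ) (P Q : Fin L → Polynomial ℝ) (hQ : ∀ i, Q i ≠ 0)
    (h : ∀ lam ∈ Set.Ioc (0 : ℝ) 1, ∃ i,
      (Q i).eval lam ≠ 0 ∧ f lam = (P i).eval lam / (Q i).eval lam) :
    ∃ lam₀ > (0 : ℝ), ∃ i, ∀ lam ∈ Set.Ioo (0 : ℝ) lam₀,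
      (Q i).eval lam ≠ 0 ∧ f lam = (P i).eval lam / (Q i).eval lam := by
  classical
  -- the "bad" set of roots
  set D : Fin L → Fin L → Polynomial ℝ := fun i j => P i * Q j - P j * Q i with hD
  set Z : Set ℝ := (⋃ i, {x | (Q i).eval x = 0}) ∪
      (⋃ i, ⋃ j, {x | D i j ≠ 0 ∧ (D i j).eval x = 0}) with hZ
  have hZfin : Z.Finite := by
    apply Set.Finite.union
    · exact Set.finite_iUnion fun i => by
        simpa [Polynomial.IsRoot] using Polynomial.finite_setOf_isRoot (hQ i)
    · refine Set.finite_iUnion fun i => Set.finite_iUnion fun j => ?_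
      rcases eq_or_ne (D i j) 0 with h0 | h0
      · simp [h0]
      · exact (Polynomial.finite_setOf_isRoot h0).subset fun x hx => hx.2
  obtain ⟨ε₀, hε₀, hεZ⟩ := aux_avoid Z hZfin
  set ε : ℝ := min ε₀ 1 with hε
  have hεpos : 0 < ε := lt_min hε₀ one_pos
  set I : Set ℝ := Set.Ioo (0:ℝ) ε with hI
  have hIsub : I ⊆ Set.Ioc (0:ℝ) 1 := fun x hx =>
    ⟨hx.1, le_of_lt (lt_of_lt_of_le hx.2 (min_le_right _ _))⟩
  have hInZ : ∀ x ∈ I, x ∉ Z := fun x hx =>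
    hεZ x ⟨hx.1, lt_of_lt_of_le hx.2 (min_le_left _ _)⟩
  have hQne : ∀ i, ∀ x ∈ I, (Q i).eval x ≠ 0 := by
    intro i x hx hc
    exact hInZ x hx (Or.inl (Set.mem_iUnion.mpr ⟨i, hc⟩))
  -- g i x = 0 iff f x = P i / Q i at x ∈ I
  set g : Fin L → ℝ → ℝ := fun i x => f x * (Q i).eval x - (P i).eval x with hg
  have hgiff : ∀ i, ∀ x ∈ I, (g i x = 0 ↔ f x = (P i).eval x / (Q i).eval x) := by
    intro i x hx
    have hq := hQne i x hx
    rw [eq_div_iff hq]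
    simp only [hg]
    constructor <;> intro h' <;> linarith
  -- the key fact
  have key : ∀ i j, ∀ x ∈ I, ∀ y ∈ I,
      g i x = 0 → g j x = 0 → g j y = 0 → g i y = 0 := by
    intro i j x hx y hy hix hjx hjy
    have hqix := hQne i x hx
    have hqjx := hQne j x hx
    have hDx : (D i j).eval x = 0 := by
      simp only [hD, Polynomial.eval_sub, Polynomial.eval_mul]
      simp only [hg] at hix hjx
      linear_combination (Polynomial.eval x (Q i)) * hjx - (Polynomial.eval x (Q j)) * hix
    have hD0 : D i j = 0 := by
      by_contra hc
      exact hInZ x hx (Or.inr (Set.mem_iUnion.mpr ⟨i, Set.mem_iUnion.mpr ⟨j, hc, hDx⟩⟩))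
    have hDy : (P i).eval y * (Q j).eval y = (P j).eval y * (Q i).eval y := by
      have : (D i j).eval y = 0 := by rw [hD0]; simp
      simp only [hD, Polynomial.eval_sub, Polynomial.eval_mul] at this
      linarith
    have hqjy := hQne j y hy
    simp only [hg] at hjy ⊢
    have : (f y * (Q i).eval y - (P i).eval y) * (Q j).eval y = 0 := by
      linear_combination (Polynomial.eval y (Q i)) * hjy - hDy
    rcases mul_eq_zero.mp this with h' | h'
    · exact h'
    · exact absurd h' hqjy
  -- existence of indices at points of I
  have hg0 : ∀ x ∈ I, ∃ i, g i x = 0 := by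
    intro x hx
    obtain ⟨i, hqi, hfi⟩ := h x (hIsub hx)
    exact ⟨i, (hgiff i x hx).mpr hfi⟩
  -- pick base point and index
  have hx₀ : (ε/2) ∈ I := ⟨half_pos hεpos, half_lt_self hεpos⟩
  obtain ⟨i, hi0⟩ := hg0 _ hx₀
  -- the class of indices disjoint from i
  set T : Finset (Fin L) := Finset.univ.filter
      (fun j => ¬ ∃ x ∈ I, g i x = 0 ∧ g j x = 0) with hT
  -- preconnectedness argument
  set u : Set ℝ := I ∩ (g i) ⁻¹' {(0:ℝ)}ᶜ with hu
  set v : Set ℝ := I ∩ ⋂ j ∈ T, (I ∩ (g j) ⁻¹' {(0:ℝ)}ᶜ) with hv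
  have hIopen : IsOpen I := isOpen_Ioo
  have hgcont : ∀ j, ContinuousOn (g j) I := fun j =>
    ((hf.mono hIsub).mul (Polynomial.continuous _).continuousOn).sub
      (Polynomial.continuous _).continuousOn
  have hopen : ∀ j : Fin L, IsOpen (I ∩ (g j) ⁻¹' {(0:ℝ)}ᶜ) := fun j =>
    (hgcont j).isOpen_inter_preimage hIopen (isOpen_compl_iff.mpr isClosed_singleton)
  have huopen : IsOpen u := hopen i
  have hvopen : IsOpen v :=
    hIopen.inter (isOpen_biInter_finset fun j _ => hopen j)
  -- if g j vanishes somewhere with g i, then anywhere g j vanishes so does g i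
  have hclass : ∀ j ∉ T, ∀ x ∈ I, g j x = 0 → g i x = 0 := by
    intro j hj x hx hjx
    rw [hT, Finset.mem_filter, not_and] at hj
    have := hj (Finset.mem_univ j)
    rw [not_not] at this
    obtain ⟨y, hy, hiy, hjy⟩ := this
    exact key i j y hy x hx hiy hjy hjx
  have hcover : I ⊆ u ∪ v := by
    intro x hx
    rcases eq_or_ne (g i x) 0 with h0 | h0
    · right
      refine ⟨hx, Set.mem_iInter₂.mpr fun j hj => ⟨hx, ?_⟩⟩
      intro hjx
      simp only [Set.mem_singleton_iff] at hjx
      rw [hT, Finset.mem_filter] at hj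
      exact hj.2 ⟨x, hx, h0, hjx⟩
    · exact Or.inl ⟨hx, h0⟩
  have hdisj : Disjoint u v := by
    rw [Set.disjoint_left]
    rintro x ⟨hxI, hxu⟩ ⟨-, hxv⟩
    obtain ⟨j, hjx⟩ := hg0 x hxI
    by_cases hj : j ∈ T
    · exact (Set.mem_iInter₂.mp hxv j hj).2 hjx
    · exact hxu (hclass j hj x hxI hjx)
  have := (isPreconnected_Ioo (a := (0:ℝ)) (b := ε)).subset_or_subset
      huopen hvopen hdisj hcover
  have hIv : I ⊆ v := by
    rcases this with h' | h'
    · exact absurd (h' hx₀).2 (by simp [hi0])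
    · exact h'
  refine ⟨ε, hεpos, i, fun x hx => ?_⟩
  have hgi : g i x = 0 := by
    obtain ⟨j, hjx⟩ := hg0 x hx
    by_cases hj : j ∈ T
    · exact absurd hjx (Set.mem_iInter₂.mp (hIv hx).2 j hj).2
    · exact hclass j hj x hx hjx
  exact ⟨hQne i x hx, (hgiff i x hx).mp hgi⟩
end

section
/- Fix a finite stochastic game (K,I,J,g,q) with n states, an initial state k, and λ ∈ (0,1]. Define the |I|ⁿ × |J|ⁿ matrix W^k_λ(z) with entries W^k_λ(z)[𝐢,𝐣] = d^k_λ(𝐢,𝐣) − z·d^0_λ(𝐢,𝐣) over pure stationary strategy pairs (𝐢,𝐣). Then for any z₁ < z₂, val W^k_λ(z₁) − val W^k_λ(z₂) ≥ (z₂ − z₁)·λⁿ; in particular z ↦ val W^k_λ(z) is strictly decreasing. -/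
/-- Transition matrix induced by a pure stationary strategy pair. -/
def Qpure {n : ℕ} {I J : Type} (q : Fin n → I → J → Fin n → ℝ)
    (bi : Fin n → I) (bj : Fin n → J) : Matrix (Fin n) (Fin n) ℝ :=
  Matrix.of fun ℓ ℓ' => q ℓ (bi ℓ) (bj ℓ) ℓ'

/-- `d^0_λ(𝐢,𝐣) = det (Id - (1-λ) Q(𝐢,𝐣))`. -/
noncomputable def d0 {n : ℕ} {I J : Type} (q : Fin n → I → J → Fin n → ℝ)
    (lam : ℝ) (bi : Fin n → I) (bj : Fin n → J) : ℝ :=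
  ((1 : Matrix (Fin n) (Fin n) ℝ) - (1 - lam) • Qpure q bi bj).det

/-- `d^k_λ(𝐢,𝐣)`: the same determinant with the `k`-th column replaced by `λ g(𝐢,𝐣)`. -/
noncomputable def dk {n : ℕ} {I J : Type} (g : Fin n → I → J → ℝ)
    (q : Fin n → I → J → Fin n → ℝ) (k : Fin n) (lam : ℝ)
    (bi : Fin n → I) (bj : Fin n → J) : ℝ :=
  (((1 : Matrix (Fin n) (Fin n) ℝ) - (1 - lam) • Qpure q bi bj).updateCol k
    (lam • fun ℓ => g ℓ (bi ℓ) (bj ℓ))).det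

/-- The parameterized matrix `W^k_λ(z)` with entries `d^k_λ(𝐢,𝐣) - z d^0_λ(𝐢,𝐣)` over
pure stationary strategy pairs. -/
noncomputable def Wmat {n : ℕ} {I J : Type} (g : Fin n → I → J → ℝ)
    (q : Fin n → I → J → Fin n → ℝ) (k : Fin n) (lam z : ℝ) :
    Matrix (Fin n → I) (Fin n → J) ℝ :=
  Matrix.of fun bi bj => dk g q k lam bi bj - z * d0 q lam bi bj

/-!
Entrywise, `W^k_λ(z₁) - W^k_λ(z₂) = (z₂ - z₁) d^0_λ`, and `d^0_λ ≥ λⁿ` by Ostrowski's bound for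
`det (1 - P)` with `P ≥ 0` of row sums `≤ 1 - λ`. That bound follows by eliminating one state at a
time: the pivot is at least `λ`, and the Schur complement of the pivot is again of the form
`1 - P'` with `P'` of the same kind. Finally, raising every entry of a matrix game by at least `c`
raises its value by at least `c`.
-/

theorem Fintype.sum_sum_unit {ι M : Type*} [Fintype ι] [AddCommMonoid M] (f : ι ⊕ Unit → M) :
    ∑ j, f j = ∑ j, f (.inl j) + f (.inr ()) := by
  simp [Fintype.sum_sum_type]

namespace Matrix

variable {ι K : Type*}

/-- `1 - elimLast Q` is the Schur complement of the last diagonal entry of `1 - Q`. -/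
def elimLast [Field K] (Q : Matrix (ι ⊕ Unit) (ι ⊕ Unit) K) : Matrix ι ι K :=
  of fun i j => Q (.inl i) (.inl j) +
    Q (.inl i) (.inr ()) * Q (.inr ()) (.inl j) / (1 - Q (.inr ()) (.inr ()))

theorem det_one_sub_eq_mul_det_one_sub_elimLast [Fintype ι] [DecidableEq ι] [Field K]
    (Q : Matrix (ι ⊕ Unit) (ι ⊕ Unit) K) (hQ : Q (.inr ()) (.inr ()) ≠ 1) :
    det (1 - Q) = (1 - Q (.inr ()) (.inr ())) * det (1 - elimLast Q) := by
  set D := (1 - Q).toBlocks₂₂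
  have hD : det D = 1 - Q (.inr ()) (.inr ()) := by
    simp [D, det_unique, toBlocks₂₂]
  have : Invertible (det D) := invertibleOfNonzero (by rw [hD]; exact sub_ne_zero.2 hQ.symm)
  have := D.invertibleOfDetInvertible
  rw [← fromBlocks_toBlocks (1 - Q), det_fromBlocks₂₂, hD, invOf_eq_nonsing_inv, inv_subsingleton]
  congr 2
  ext i j
  simp [toBlocks₁₁, toBlocks₁₂, toBlocks₂₁, toBlocks₂₂, elimLast, one_apply, mul_apply]
  ring

section Substochastic

variable [Fintype ι] {lam : ℝ} {Q : Matrix (ι ⊕ Unit) (ι ⊕ Unit) ℝ}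

theorem sum_inr_inl_add_le (hQ1 : ∀ i, ∑ j, Q i j ≤ 1 - lam) :
    ∑ j, Q (.inr ()) (.inl j) + lam ≤ 1 - Q (.inr ()) (.inr ()) := by
  linarith [Fintype.sum_sum_unit (Q (.inr ())) ▸ hQ1 (.inr ())]

theorem le_one_sub_inr_inr (hQ0 : ∀ i j, 0 ≤ Q i j) (hQ1 : ∀ i, ∑ j, Q i j ≤ 1 - lam) :
    lam ≤ 1 - Q (.inr ()) (.inr ()) := by
  linarith [sum_inr_inl_add_le hQ1, Finset.sum_nonneg fun j (_ : j ∈ Finset.univ) =>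
      hQ0 (.inr ()) (.inl j)]

theorem elimLast_nonneg (hlam : 0 ≤ lam) (hQ0 : ∀ i j, 0 ≤ Q i j)
    (hQ1 : ∀ i, ∑ j, Q i j ≤ 1 - lam) (i j : ι) : 0 ≤ elimLast Q i j :=
  add_nonneg (hQ0 _ _) <| div_nonneg (mul_nonneg (hQ0 _ _) (hQ0 _ _))
    (hlam.trans (le_one_sub_inr_inr hQ0 hQ1))

theorem sum_elimLast_le (hlam : 0 ≤ lam) (hQ0 : ∀ i j, 0 ≤ Q i j)
    (hQ1 : ∀ i, ∑ j, Q i j ≤ 1 - lam) (i : ι) : ∑ j, elimLast Q i j ≤ 1 - lam := by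
  have hlast : ∑ j, Q (.inr ()) (.inl j) / (1 - Q (.inr ()) (.inr ())) ≤ 1 := by
    rw [← Finset.sum_div]
    exact div_le_one_of_le₀ (by linarith [sum_inr_inl_add_le hQ1])
      (hlam.trans (le_one_sub_inr_inr hQ0 hQ1))
  calc ∑ j, elimLast Q i j
      = ∑ j, Q (.inl i) (.inl j) + Q (.inl i) (.inr ()) *
          ∑ j, Q (.inr ()) (.inl j) / (1 - Q (.inr ()) (.inr ())) := by
        simp only [elimLast, of_apply, Finset.sum_add_distrib, Finset.mul_sum, mul_div_assoc]
    _ ≤ ∑ j, Q (.inl i) (.inl j) + Q (.inl i) (.inr ()) := by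
        grw [hlast, mul_one]
        exact hQ0 _ _
    _ ≤ 1 - lam := Fintype.sum_sum_unit (Q (.inl i)) ▸ hQ1 (.inl i)

end Substochastic

theorem pow_card_le_det_one_sub [Fintype ι] [DecidableEq ι] {lam : ℝ} (hlam : 0 < lam)
    (P : Matrix ι ι ℝ) (hP0 : ∀ i j, 0 ≤ P i j) (hP1 : ∀ i, ∑ j, P i j ≤ 1 - lam) :
    lam ^ Fintype.card ι ≤ det (1 - P) := by
  induction h : Fintype.card ι generalizing ι with
  | zero =>
    have := Fintype.card_eq_zero_iff.1 h
    simp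
  | succ n ih =>
    obtain ⟨i₀⟩ : Nonempty ι := Fintype.card_pos_iff.1 (h ▸ n.succ_pos)
    let e : ι ≃ {i // i ≠ i₀} ⊕ Unit :=
      (Equiv.optionSubtypeNe i₀).symm.trans (Equiv.optionEquivSumPUnit _)
    have hcard : Fintype.card {i // i ≠ i₀} = n := by
      have := Fintype.card_congr (Equiv.optionSubtypeNe i₀)
      rw [Fintype.card_option, h] at this
      omega
    set Q := P.submatrix e.symm e.symm
    have hQ0 : ∀ i j, 0 ≤ Q i j := fun _ _ => hP0 _ _
    have hQ1 : ∀ i, ∑ j, Q i j ≤ 1 - lam := fun i =>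
      (e.symm.sum_comp (P (e.symm i))).trans_le (hP1 _)
    have hpiv := le_one_sub_inr_inr hQ0 hQ1
    have hdet : det (1 - P) = det (1 - Q) := by
      rw [← det_submatrix_equiv_self e.symm]
      congr 1
      ext i j
      simp [Q, one_apply]
    rw [hdet, det_one_sub_eq_mul_det_one_sub_elimLast Q (by linarith), pow_succ']
    exact mul_le_mul hpiv (ih (elimLast Q) (elimLast_nonneg hlam.le hQ0 hQ1)
      (sum_elimLast_le hlam.le hQ0 hQ1) hcard) (by positivity) (by linarith)

end Matrix

section MatrixGame

variable {α β : Type*} [Fintype α] [Fintype β]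

def payoff (M : Matrix α β ℝ) (s : stdSimplex ℝ α) (t : stdSimplex ℝ β) : ℝ :=
  ∑ a, ∑ b, s.1 a * M a b * t.1 b

theorem matVal_eq_iSup_iInf_payoff (M : Matrix α β ℝ) :
    matVal M = ⨆ s, ⨅ t, payoff M s t := rfl

theorem continuous_payoff (M : Matrix α β ℝ) :
    Continuous fun p : stdSimplex ℝ α × stdSimplex ℝ β => payoff M p.1 p.2 := by
  have h₁ : Continuous fun p : stdSimplex ℝ α × stdSimplex ℝ β => (p.1 : α → ℝ) := by fun_prop
  have h₂ : Continuous fun p : stdSimplex ℝ α × stdSimplex ℝ β => (p.2 : β → ℝ) := by fun_prop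
  exact continuous_finsetSum _ fun a _ => continuous_finsetSum _ fun b _ =>
    ((continuous_apply a).comp h₁ |>.mul continuous_const).mul ((continuous_apply b).comp h₂)

theorem exists_abs_payoff_le (M : Matrix α β ℝ) : ∃ C, ∀ s t, |payoff M s t| ≤ C := by
  obtain ⟨C, hC⟩ := (isCompact_range (continuous_payoff M)).isBounded.exists_norm_le
  exact ⟨C, fun s t => hC _ ⟨(s, t), rfl⟩⟩

theorem bddBelow_range_payoff (M : Matrix α β ℝ) (s : stdSimplex ℝ α) :
    BddBelow (Set.range fun t => payoff M s t) := by
  obtain ⟨C, hC⟩ := exists_abs_payoff_le M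
  exact ⟨-C, Set.forall_mem_range.2 fun t => (abs_le.1 (hC s t)).1⟩

theorem bddAbove_range_iInf_payoff [Nonempty β] (M : Matrix α β ℝ) :
    BddAbove (Set.range fun s => ⨅ t, payoff M s t) := by
  obtain ⟨C, hC⟩ := exists_abs_payoff_le M
  obtain ⟨t⟩ := (inferInstance : Nonempty (stdSimplex ℝ β))
  exact ⟨C, Set.forall_mem_range.2 fun s =>
    (ciInf_le (bddBelow_range_payoff M s) t).trans (abs_le.1 (hC s t)).2⟩

theorem payoff_add_le {M N : Matrix α β ℝ} {c : ℝ} (h : ∀ a b, N a b + c ≤ M a b)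
    (s : stdSimplex ℝ α) (t : stdSimplex ℝ β) : payoff N s t + c ≤ payoff M s t := by
  have hc : c = ∑ a, ∑ b, s.1 a * c * t.1 b := by
    simp only [← Finset.mul_sum, ← Finset.sum_mul, s.2.2, t.2.2, one_mul, mul_one]
  rw [hc, payoff, payoff, ← sub_nonneg, ← Finset.sum_add_distrib, ← Finset.sum_sub_distrib]
  refine Finset.sum_nonneg fun a _ => ?_
  rw [← Finset.sum_add_distrib, ← Finset.sum_sub_distrib]
  refine Finset.sum_nonneg fun b _ => ?_
  have := mul_nonneg (mul_nonneg (s.2.1 a) (sub_nonneg.2 (h a b))) (t.2.1 b)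
  linarith

theorem matVal_add_le [Nonempty α] [Nonempty β] {M N : Matrix α β ℝ} {c : ℝ}
    (h : ∀ a b, N a b + c ≤ M a b) : matVal N + c ≤ matVal M := by
  rw [matVal_eq_iSup_iInf_payoff, matVal_eq_iSup_iInf_payoff, ← le_sub_iff_add_le]
  refine ciSup_le fun s => le_sub_iff_add_le.2 <|
    (le_ciSup (bddAbove_range_iInf_payoff M) s).trans' <| le_ciInf fun t => ?_
  calc (⨅ t, payoff N s t) + c ≤ payoff N s t + c := by
        gcongr
        exact ciInf_le (bddBelow_range_payoff N s) t
    _ ≤ payoff M s t := payoff_add_le h s t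

end MatrixGame

theorem pow_le_d0 {n : ℕ} {I J : Type} {q : Fin n → I → J → Fin n → ℝ}
    (hq0 : ∀ ℓ i j ℓ', 0 ≤ q ℓ i j ℓ') (hq1 : ∀ ℓ i j, ∑ ℓ', q ℓ i j ℓ' = 1)
    {lam : ℝ} (hl0 : 0 < lam) (hl1 : lam ≤ 1) (bi : Fin n → I) (bj : Fin n → J) :
    lam ^ n ≤ d0 q lam bi bj := by
  simpa [d0] using Matrix.pow_card_le_det_one_sub hl0 ((1 - lam) • Qpure q bi bj)
    (fun ℓ ℓ' => mul_nonneg (sub_nonneg.2 hl1) (hq0 _ _ _ _))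
    (fun ℓ => by simp [Qpure, ← Finset.mul_sum, hq1])

/-- For `z₁ < z₂`, `val W^k_λ(z₁) - val W^k_λ(z₂) ≥ (z₂ - z₁) λⁿ`; in particular
`z ↦ val W^k_λ(z)` is strictly decreasing. -/
theorem stmt14 (n : ℕ) (I J : Type) [Fintype I] [Fintype J] [Nonempty I] [Nonempty J]
    (g : Fin n → I → J → ℝ) (q : Fin n → I → J → Fin n → ℝ)
    (hq0 : ∀ ℓ i j ℓ', 0 ≤ q ℓ i j ℓ') (hq1 : ∀ ℓ i j, ∑ ℓ', q ℓ i j ℓ' = 1)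
    (lam : ℝ) (hl0 : 0 < lam) (hl1 : lam ≤ 1) (k : Fin n) :
    (∀ z₁ z₂ : ℝ, z₁ < z₂ →
      (z₂ - z₁) * lam ^ n ≤ matVal (Wmat g q k lam z₁) - matVal (Wmat g q k lam z₂)) ∧
    StrictAnti fun z : ℝ => matVal (Wmat g q k lam z) := by
  have hgap : ∀ z₁ z₂ : ℝ, z₁ < z₂ →
      (z₂ - z₁) * lam ^ n ≤ matVal (Wmat g q k lam z₁) - matVal (Wmat g q k lam z₂) := by
    intro z₁ z₂ hz
    suffices matVal (Wmat g q k lam z₂) + (z₂ - z₁) * lam ^ n ≤ matVal (Wmat g q k lam z₁) by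
      linarith
    refine matVal_add_le fun bi bj => ?_
    have := mul_le_mul_of_nonneg_left (pow_le_d0 hq0 hq1 hl0 hl1 bi bj) (sub_nonneg.2 hz.le)
    simp only [Wmat, Matrix.of_apply]
    linarith
  exact ⟨hgap, fun z₁ z₂ hz => by
    linarith [hgap z₁ z₂ hz, mul_pos (sub_pos.2 hz) (pow_pos hl0 n)]⟩
end

section
/- For finite stochastic games, the λ-discounted values converge as λ → 0⁺: if for each z ∈ ℝ the function λ ↦ val W^k_λ(z) coincides near 0 with a rational function of λ (so F^k(z) := lim_{λ→0} val W^k_λ(z)/λⁿ exists in the extended reals), and w is the unique sign-change point of F^k, then lim_{λ→0} v^k_λ = w. -/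
/-!
For `λ ∈ (0, 1]` the matrix `Id - (1 - λ) Q` is strictly diagonally dominant, and so is every
`Id - u Q` with `0 ≤ u ≤ 1 - λ`; its determinant therefore never vanishes on the segment from
`det Id = 1`, hence `d^0_λ > 0`. Consequently every entry of `W^k_λ(z)` is decreasing in `z`, and so
is `val W^k_λ(z)`. Given `a < w < b`, `F^k(a) > 0 > F^k(b)` forces
`val W^k_λ(a) > 0 > val W^k_λ(b)` for small `λ` (dividing by `λⁿ > 0` does not change signs), and
monotonicity traps the zero `v^k_λ` in `(a, b)`.
-/

open Filter Topology

section MatrixGame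

variable {α β : Type*} [Fintype α] [Fintype β]

noncomputable def mixedPayoff (M : Matrix α β ℝ) (s : stdSimplex ℝ α) (t : stdSimplex ℝ β) : ℝ :=
  ∑ a, ∑ b, s.1 a * M a b * t.1 b

lemma continuous_mixedPayoff (M : Matrix α β ℝ) :
    Continuous fun st : stdSimplex ℝ α × stdSimplex ℝ β => mixedPayoff M st.1 st.2 := by
  have hs : ∀ a, Continuous fun st : stdSimplex ℝ α × stdSimplex ℝ β => (st.1 : α → ℝ) a :=
    fun a => (continuous_apply a).comp (continuous_subtype_val.comp continuous_fst)
  have ht : ∀ b, Continuous fun st : stdSimplex ℝ α × stdSimplex ℝ β => (st.2 : β → ℝ) b :=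
    fun b => (continuous_apply b).comp (continuous_subtype_val.comp continuous_snd)
  unfold mixedPayoff
  fun_prop

lemma bddBelow_range_mixedPayoff (M : Matrix α β ℝ) (s : stdSimplex ℝ α) :
    BddBelow (Set.range (mixedPayoff M s)) :=
  (isCompact_range ((continuous_mixedPayoff M).comp (Continuous.prodMk_right s))).bddBelow

lemma mixedPayoff_mono {M N : Matrix α β ℝ} (h : ∀ a b, M a b ≤ N a b)
    (s : stdSimplex ℝ α) (t : stdSimplex ℝ β) : mixedPayoff M s t ≤ mixedPayoff N s t :=
  Finset.sum_le_sum fun a _ => Finset.sum_le_sum fun b _ =>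
    mul_le_mul_of_nonneg_right (mul_le_mul_of_nonneg_left (h a b) (s.2.1 a)) (t.2.1 b)

lemma matVal_mono [Nonempty β] {M N : Matrix α β ℝ} (h : ∀ a b, M a b ≤ N a b) :
    matVal M ≤ matVal N := by
  obtain ⟨C, hC⟩ := (isCompact_range (continuous_mixedPayoff N)).bddAbove
  refine ciSup_mono ⟨C, ?_⟩ fun s =>
    ciInf_mono (bddBelow_range_mixedPayoff M s) (mixedPayoff_mono h s)
  rintro _ ⟨s, rfl⟩
  exact ciInf_le_of_le (bddBelow_range_mixedPayoff N s) (Classical.arbitrary _)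
    (hC ⟨(s, _), rfl⟩)

end MatrixGame

section Substochastic

variable {ι : Type*} [Fintype ι] [DecidableEq ι] {Q : Matrix ι ι ℝ}

lemma det_one_sub_smul_ne_zero (hQ0 : ∀ i j, 0 ≤ Q i j) (hQ1 : ∀ i, ∑ j, Q i j ≤ 1)
    {u : ℝ} (hu0 : 0 ≤ u) (hu1 : u < 1) : (1 - u • Q).det ≠ 0 := by
  refine det_ne_zero_of_sum_row_lt_diag fun i => ?_
  have hQii : Q i i ≤ 1 :=
    (Finset.single_le_sum (fun j _ => hQ0 i j) (Finset.mem_univ i)).trans (hQ1 i)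
  have hoff : ∑ j ∈ Finset.univ.erase i, ‖(1 - u • Q) i j‖ = u * (∑ j, Q i j - Q i i) := by
    rw [← Finset.sum_erase_eq_sub (Finset.mem_univ i), Finset.mul_sum]
    refine Finset.sum_congr rfl fun j hj => ?_
    simp [Matrix.one_apply_ne' (Finset.ne_of_mem_erase hj), abs_of_nonneg hu0,
      abs_of_nonneg (hQ0 i j)]
  have hdiag : ‖(1 - u • Q) i i‖ = 1 - u * Q i i := by
    simp only [Matrix.sub_apply, Matrix.one_apply_eq, Matrix.smul_apply, smul_eq_mul,
      Real.norm_eq_abs]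
    exact abs_of_pos (by nlinarith)
  rw [hoff, hdiag]
  nlinarith [hQ1 i]

lemma det_one_sub_smul_pos (hQ0 : ∀ i j, 0 ≤ Q i j) (hQ1 : ∀ i, ∑ j, Q i j ≤ 1)
    {u : ℝ} (hu0 : 0 ≤ u) (hu1 : u < 1) : 0 < (1 - u • Q).det := by
  by_contra! hneg
  have hcont : Continuous fun v : ℝ => (1 - v • Q).det := by fun_prop
  obtain ⟨v, hv, hv0⟩ := intermediate_value_Icc' hu0 hcont.continuousOn ⟨hneg, by simp⟩
  exact det_one_sub_smul_ne_zero hQ0 hQ1 hv.1 (hv.2.trans_lt hu1) hv0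

end Substochastic

lemma eventually_neg_of_tendsto_div_pow {f : ℝ → ℝ} {n : ℕ} {L : EReal}
    (hf : Tendsto (fun x => ((f x / x ^ n : ℝ) : EReal)) (𝓝[>] 0) (𝓝 L)) (hL : L < 0) :
    ∀ᶠ x in 𝓝[>] 0, f x < 0 := by
  filter_upwards [hf.eventually_lt_const hL, self_mem_nhdsWithin] with x hx hx0
  exact neg_of_div_neg_left (by exact_mod_cast hx) (pow_pos (Set.mem_Ioi.1 hx0) n).le

lemma eventually_pos_of_tendsto_div_pow {f : ℝ → ℝ} {n : ℕ} {L : EReal}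
    (hf : Tendsto (fun x => ((f x / x ^ n : ℝ) : EReal)) (𝓝[>] 0) (𝓝 L)) (hL : 0 < L) :
    ∀ᶠ x in 𝓝[>] 0, 0 < f x := by
  filter_upwards [hf.eventually_const_lt hL, self_mem_nhdsWithin] with x hx hx0
  exact (div_pos_iff_of_pos_right (pow_pos (Set.mem_Ioi.1 hx0) n)).1 (by exact_mod_cast hx)

section StochasticGame

variable {n : ℕ} {I J : Type} (g : Fin n → I → J → ℝ) {q : Fin n → I → J → Fin n → ℝ}

lemma d0_pos (hq0 : ∀ ℓ i j ℓ', 0 ≤ q ℓ i j ℓ') (hq1 : ∀ ℓ i j, ∑ ℓ', q ℓ i j ℓ' = 1)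
    {lam : ℝ} (hlam : lam ∈ Set.Ioc 0 1) (bi : Fin n → I) (bj : Fin n → J) :
    0 < d0 q lam bi bj :=
  det_one_sub_smul_pos (Q := Qpure q bi bj) (fun _ _ => hq0 _ _ _ _) (fun _ => (hq1 _ _ _).le)
    (sub_nonneg.2 hlam.2) (sub_lt_self 1 hlam.1)

lemma antitone_matVal_Wmat [Fintype I] [Fintype J] [Nonempty J]
    (hq0 : ∀ ℓ i j ℓ', 0 ≤ q ℓ i j ℓ') (hq1 : ∀ ℓ i j, ∑ ℓ', q ℓ i j ℓ' = 1) (k : Fin n)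
    {lam : ℝ} (hlam : lam ∈ Set.Ioc 0 1) : Antitone fun z => matVal (Wmat g q k lam z) :=
  fun _ _ hz => matVal_mono fun bi bj => by
    simp only [Wmat, Matrix.of_apply]
    exact sub_le_sub_left (mul_le_mul_of_nonneg_right hz (d0_pos hq0 hq1 hlam bi bj).le) _

end StochasticGame

theorem stmt19_general (n : ℕ) (I J : Type) [Fintype I] [Fintype J] [Nonempty J]
    (g : Fin n → I → J → ℝ) (q : Fin n → I → J → Fin n → ℝ)
    (hq0 : ∀ ℓ i j ℓ', 0 ≤ q ℓ i j ℓ') (hq1 : ∀ ℓ i j, ∑ ℓ', q ℓ i j ℓ' = 1)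
    (k : Fin n) (vk : ℝ → ℝ) (F : ℝ → EReal) (w : ℝ)
    (hvk : ∀ lam ∈ Set.Ioc (0 : ℝ) 1, matVal (Wmat g q k lam (vk lam)) = 0)
    (hF : ∀ z : ℝ, Filter.Tendsto
      (fun lam : ℝ => ((matVal (Wmat g q k lam z) / lam ^ n : ℝ) : EReal))
      (nhdsWithin 0 (Set.Ioi 0)) (nhds (F z)))
    (hw1 : ∀ z : ℝ, w < z → F z < 0) (hw2 : ∀ z : ℝ, z < w → 0 < F z) :
    Filter.Tendsto vk (nhdsWithin 0 (Set.Ioi 0)) (nhds w) := by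
  have hsmall : ∀ᶠ lam in 𝓝[>] (0 : ℝ), lam ∈ Set.Ioc 0 1 := Ioc_mem_nhdsGT zero_lt_one
  refine tendsto_order.2 ⟨fun a ha => ?_, fun b hb => ?_⟩
  · filter_upwards [hsmall, eventually_pos_of_tendsto_div_pow (hF a) (hw2 a ha)] with lam hlam hpos
    exact (antitone_matVal_Wmat g hq0 hq1 k hlam).reflect_lt (by rwa [hvk lam hlam])
  · filter_upwards [hsmall, eventually_neg_of_tendsto_div_pow (hF b) (hw1 b hb)] with lam hlam hneg
    exact (antitone_matVal_Wmat g hq0 hq1 k hlam).reflect_lt (by rwa [hvk lam hlam])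

/-- **Theorem 2 (convergence of the discounted values).** If `vk λ` is the
`λ`-discounted value (the unique zero of `z ↦ val W^k_λ(z)`), if for each `z` the limit
`F^k(z) = lim_{λ→0⁺} val W^k_λ(z)/λⁿ` exists in the extended reals, and if `w` is the
unique sign-change point of `F^k`, then `v^k_λ → w` as `λ → 0⁺`. -/
theorem stmt19 (n : ℕ) (I J : Type) [Fintype I] [Fintype J] [Nonempty I] [Nonempty J]
    (g : Fin n → I → J → ℝ) (q : Fin n → I → J → Fin n → ℝ)
    (hq0 : ∀ ℓ i j ℓ', 0 ≤ q ℓ i j ℓ') (hq1 : ∀ ℓ i j, ∑ ℓ', q ℓ i j ℓ' = 1)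
    (k : Fin n) (vk : ℝ → ℝ) (F : ℝ → EReal) (w : ℝ)
    (hvk : ∀ lam ∈ Set.Ioc (0 : ℝ) 1, matVal (Wmat g q k lam (vk lam)) = 0)
    (hF : ∀ z : ℝ, Filter.Tendsto
      (fun lam : ℝ => ((matVal (Wmat g q k lam z) / lam ^ n : ℝ) : EReal))
      (nhdsWithin 0 (Set.Ioi 0)) (nhds (F z)))
    (hw1 : ∀ z : ℝ, w < z → F z < 0) (hw2 : ∀ z : ℝ, z < w → 0 < F z) :
    Filter.Tendsto vk (nhdsWithin 0 (Set.Ioi 0)) (nhds w) :=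
  stmt19_general n I J g q hq0 hq1 k vk F w hvk hF hw1 hw2
end
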